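/- There exists a constant C > 0 such that for every function v : [0,1] → ℝ that is three times continuously differentiable with v(0) = v(1) = 0, one has (∫₀¹ |v(x)|⁸ dx)^{1/8} ≤ C[ (∫₀¹ |v'''(x)|² dx)^{1/16} · (∫₀¹ |v(x)|² dx)^{7/16} + (∫₀¹ |v(x)|² dx)^{1/2} ]. -/

import Mathlib

/-!
Write `a, b, c, d` for the `L²(0,1)` norms of `v, v', v'', v'''`. Integrating by parts,
`v(0) = v(1) = 0` gives `b² ≤ a c`. Without boundary conditions, integrating `g'²` by parts leaves
the boundary terms `g g'` at `0` and `1`, which the elementary bound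
`sup f² ≤ ‖f‖² + 2 ‖f‖ ‖f'‖` controls well enough to give the Landau-type inequality
`‖g'‖² ≤ 400 (‖g‖² + ‖g‖ ‖g''‖)`; for `g = v'` this is `c² ≤ 400 (b² + b d)`. Eliminating `c` yields
`b³ ≲ a³ + a² d`, hence `sup v² ≤ a² + 2 a b` and `∫ v⁸ ≤ (sup v²)³ a² ≲ a⁸ + a⁷ d`.
-/

open Set MeasureTheory intervalIntegral
open scoped Interval

noncomputable def unitL2Norm (f : ℝ → ℝ) : ℝ := √(∫ x in (0:ℝ)..1, f x ^ 2)

lemma unitL2Norm_nonneg (f : ℝ → ℝ) : 0 ≤ unitL2Norm f := Real.sqrt_nonneg _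

lemma sq_unitL2Norm (f : ℝ → ℝ) : unitL2Norm f ^ 2 = ∫ x in (0:ℝ)..1, f x ^ 2 :=
  Real.sq_sqrt (integral_nonneg zero_le_one fun _ _ ↦ sq_nonneg _)

lemma sq_integral_mul_le_integral_sq_mul_integral_sq {f g : ℝ → ℝ} {a b : ℝ} (hab : a ≤ b)
    (hf : Continuous f) (hg : Continuous g) :
    (∫ x in a..b, f x * g x) ^ 2 ≤ (∫ x in a..b, f x ^ 2) * ∫ x in a..b, g x ^ 2 := by
  have hquad : ∀ t : ℝ, 0 ≤ (∫ x in a..b, g x ^ 2) * (t * t)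
      + (-2 * ∫ x in a..b, f x * g x) * t + ∫ x in a..b, f x ^ 2 := by
    intro t
    have hexpand : ∫ x in a..b, (t * g x - f x) ^ 2 = (∫ x in a..b, g x ^ 2) * (t * t)
        + (-2 * ∫ x in a..b, f x * g x) * t + ∫ x in a..b, f x ^ 2 := by
      have hpt : (fun x ↦ (t * g x - f x) ^ 2)
          = fun x ↦ t ^ 2 * g x ^ 2 - 2 * t * (f x * g x) + f x ^ 2 := by ext; ring
      rw [hpt, intervalIntegral.integral_add, intervalIntegral.integral_sub,
        intervalIntegral.integral_const_mul, intervalIntegral.integral_const_mul]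
      · ring
      all_goals exact Continuous.intervalIntegrable (by fun_prop) _ _
    exact hexpand ▸ integral_nonneg hab fun _ _ ↦ sq_nonneg _
  have hdisc := discrim_le_zero hquad
  rw [discrim] at hdisc
  nlinarith

lemma integral_abs_mul_le_unitL2Norm_mul {f g : ℝ → ℝ} (hf : Continuous f) (hg : Continuous g) :
    ∫ x in (0:ℝ)..1, |f x * g x| ≤ unitL2Norm f * unitL2Norm g := by
  have hcs := sq_integral_mul_le_integral_sq_mul_integral_sq zero_le_one hf.abs hg.abs
  simp only [sq_abs, ← abs_mul, ← sq_unitL2Norm, ← mul_pow] at hcs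
  exact abs_le_of_sq_le_sq' hcs (mul_nonneg (unitL2Norm_nonneg _) (unitL2Norm_nonneg _)) |>.2

lemma abs_integral_mul_le_unitL2Norm_mul {f g : ℝ → ℝ} (hf : Continuous f) (hg : Continuous g) :
    |∫ x in (0:ℝ)..1, f x * g x| ≤ unitL2Norm f * unitL2Norm g :=
  (abs_integral_le_integral_abs zero_le_one).trans (integral_abs_mul_le_unitL2Norm_mul hf hg)

lemma abs_integral_le_integral_abs_of_mem_Icc {h : ℝ → ℝ} (hh : Continuous h) {a b y s : ℝ}
    (hy : y ∈ Icc a b) (hs : s ∈ Icc a b) :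
    |∫ x in y..s, h x| ≤ ∫ x in a..b, |h x| := by
  have hsub : Ι y s ⊆ Ioc a b := Ioc_subset_Ioc (le_min hy.1 hs.1) (max_le hy.2 hs.2)
  calc |∫ x in y..s, h x|
      ≤ ∫ x in Ι y s, |h x| := by simpa only [Real.norm_eq_abs] using
        norm_integral_le_integral_norm_uIoc (f := h)
    _ ≤ ∫ x in Ioc a b, |h x| :=
      setIntegral_mono_set (hh.abs.integrableOn_Ioc) (ae_of_all _ fun _ ↦ abs_nonneg _)
        hsub.eventuallyLE
    _ = ∫ x in a..b, |h x| := (integral_of_le (hy.1.trans hy.2)).symm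

lemma sq_le_unitL2Norm_sq_add_two_mul {f : ℝ → ℝ} (hf : ContDiff ℝ 1 f) {s : ℝ}
    (hs : s ∈ Icc (0:ℝ) 1) :
    f s ^ 2 ≤ unitL2Norm f ^ 2 + 2 * (unitL2Norm f * unitL2Norm (deriv f)) := by
  have hd := hf.differentiable one_ne_zero
  have hcf := hf.continuous
  have hc := hf.continuous_deriv le_rfl
  set E := ∫ x in (0:ℝ)..1, |f x * deriv f x|
  have hE : E ≤ unitL2Norm f * unitL2Norm (deriv f) :=
    integral_abs_mul_le_unitL2Norm_mul hcf hc
  -- `f s ^ 2 - f y ^ 2 = 2 ∫ f f'`; then average over `y`.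
  have hy : ∀ y ∈ Icc (0:ℝ) 1, f s ^ 2 - 2 * E ≤ f y ^ 2 := by
    intro y hy
    have hftc : 2 * ∫ x in y..s, f x * deriv f x = f s ^ 2 - f y ^ 2 := by
      rw [← intervalIntegral.integral_const_mul]
      exact integral_eq_sub_of_hasDerivAt (f := fun x ↦ f x ^ 2)
        (fun x _ ↦ ((hd x).hasDerivAt.fun_pow 2).congr_deriv (by norm_num [mul_assoc]))
        ((by fun_prop : Continuous fun x ↦ 2 * (f x * deriv f x)).intervalIntegrable _ _)
    have hE' : |∫ x in y..s, f x * deriv f x| ≤ E :=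
      abs_integral_le_integral_abs_of_mem_Icc (by fun_prop) hy hs
    linarith [le_abs_self (∫ x in y..s, f x * deriv f x)]
  have hint : ∫ _ in (0:ℝ)..1, (f s ^ 2 - 2 * E) ≤ ∫ y in (0:ℝ)..1, f y ^ 2 :=
    integral_mono_on zero_le_one intervalIntegrable_const
      ((hcf.pow 2).intervalIntegrable 0 1) hy
  rw [intervalIntegral.integral_const, ← sq_unitL2Norm] at hint
  simp only [sub_zero, one_smul] at hint
  linarith

lemma unitL2Norm_deriv_sq_eq {g : ℝ → ℝ} (hg : ContDiff ℝ 2 g) :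
    unitL2Norm (deriv g) ^ 2
      = g 1 * deriv g 1 - g 0 * deriv g 0 - ∫ x in (0:ℝ)..1, g x * deriv (deriv g) x := by
  have hibp := integral_mul_deriv_eq_deriv_mul (a := 0) (b := 1)
    (fun x _ ↦ (hg.differentiable two_ne_zero x).hasDerivAt)
    (fun x _ ↦ (hg.differentiable_deriv_two x).hasDerivAt)
    ((hg.continuous_deriv one_le_two).intervalIntegrable _ _)
    ((hg.deriv'.continuous_deriv le_rfl).intervalIntegrable _ _)
  rw [sq_unitL2Norm]
  simp only [sq]
  linarith

/-- The algebra of the Landau inequality: `b, c, d` stand for `‖g‖, ‖g'‖, ‖g''‖` and `P` for the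
boundary terms. -/
lemma sq_le_of_sq_le_add_mul {b c d P : ℝ} (hb : 0 ≤ b) (hc : 0 ≤ c) (hd : 0 ≤ d)
    (hP : 0 ≤ P) (hcP : c ^ 2 ≤ P + b * d)
    (hP2 : P ^ 2 ≤ 4 * (b ^ 2 + 2 * b * c) * (c ^ 2 + 2 * c * d)) :
    c ^ 2 ≤ 400 * (b ^ 2 + b * d) := by
  by_contra! hlt
  have hbc : 20 * b ≤ c := by nlinarith
  have hbd : 400 * (b * d) ≤ c ^ 2 := by nlinarith
  have hPc : 399 * c ^ 2 ≤ 400 * P := by nlinarith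
  have hc0 : 0 < c := by nlinarith
  have e1 : 20 * (b * c ^ 3) ≤ c ^ 4 := by nlinarith [pow_pos hc0 3]
  have e2 : 400 * (b * d * c ^ 2) ≤ c ^ 4 := by nlinarith [pow_pos hc0 2]
  have e3 : 400 * (b ^ 2 * c ^ 2) ≤ c ^ 4 := by nlinarith [pow_pos hc0 2]
  have e4 : 8000 * (b ^ 2 * c * d) ≤ c ^ 4 := by nlinarith [mul_nonneg hb hc]
  nlinarith [mul_le_mul hPc hPc (by positivity) (by positivity)]

lemma unitL2Norm_deriv_sq_le {g : ℝ → ℝ} (hg : ContDiff ℝ 2 g) :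
    unitL2Norm (deriv g) ^ 2 ≤ 400 * (unitL2Norm g ^ 2
      + unitL2Norm g * unitL2Norm (deriv (deriv g))) := by
  set b := unitL2Norm g
  set c := unitL2Norm (deriv g)
  set d := unitL2Norm (deriv (deriv g))
  have hb : 0 ≤ b := unitL2Norm_nonneg _
  have hc : 0 ≤ c := unitL2Norm_nonneg _
  have hg1 : ContDiff ℝ 1 g := hg.of_le one_le_two
  have hg' : ContDiff ℝ 1 (deriv g) := hg.deriv'
  have hboundary : ∀ x ∈ Icc (0:ℝ) 1,
      (g x * deriv g x) ^ 2 ≤ (b ^ 2 + 2 * b * c) * (c ^ 2 + 2 * c * d) := by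
    intro x hx
    rw [mul_pow]
    exact mul_le_mul (by linarith [sq_le_unitL2Norm_sq_add_two_mul hg1 hx])
      (by linarith [sq_le_unitL2Norm_sq_add_two_mul hg' hx]) (sq_nonneg _)
      (by positivity)
  set P := |g 1 * deriv g 1| + |g 0 * deriv g 0|
  have hP2 : P ^ 2 ≤ 4 * (b ^ 2 + 2 * b * c) * (c ^ 2 + 2 * c * d) := by
    have h1 := hboundary 1 (right_mem_Icc.2 zero_le_one)
    have h0 := hboundary 0 (left_mem_Icc.2 zero_le_one)
    rw [← sq_abs] at h0 h1
    nlinarith [sq_nonneg (|g 1 * deriv g 1| - |g 0 * deriv g 0|)]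
  have hcP : c ^ 2 ≤ P + b * d := by
    rw [unitL2Norm_deriv_sq_eq hg]
    have := abs_integral_mul_le_unitL2Norm_mul hg.continuous (hg'.continuous_deriv le_rfl)
    linarith [le_abs_self (g 1 * deriv g 1), neg_abs_le (g 0 * deriv g 0),
      neg_abs_le (∫ x in (0:ℝ)..1, g x * deriv (deriv g) x)]
  exact sq_le_of_sq_le_add_mul hb hc (unitL2Norm_nonneg _) (by positivity) hcP hP2

lemma unitL2Norm_deriv_sq_le_of_eq_zero {v : ℝ → ℝ} (hv : ContDiff ℝ 2 v) (h0 : v 0 = 0)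
    (h1 : v 1 = 0) : unitL2Norm (deriv v) ^ 2 ≤ unitL2Norm v * unitL2Norm (deriv (deriv v)) := by
  rw [unitL2Norm_deriv_sq_eq hv, h0, h1, zero_mul, zero_mul, sub_zero, zero_sub]
  exact (neg_le_abs _).trans
    (abs_integral_mul_le_unitL2Norm_mul hv.continuous (hv.deriv'.continuous_deriv le_rfl))

lemma cube_le_of_pow_four_le {a b d : ℝ} (ha : 0 ≤ a) (hb : 0 ≤ b) (hd : 0 ≤ d)
    (h : b ^ 4 ≤ 400 * a ^ 2 * (b ^ 2 + b * d)) : b ^ 3 ≤ 16000 * (a ^ 3 + a ^ 2 * d) := by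
  rcases hb.eq_or_lt with rfl | hbpos
  · rw [zero_pow three_ne_zero]; positivity
  have h3 : b ^ 3 ≤ 400 * a ^ 2 * b + 400 * a ^ 2 * d := by nlinarith
  nlinarith [sq_nonneg (b - 40 * a), mul_nonneg ha hb]

lemma cube_mul_sq_le_of_cube_le {a b d : ℝ} (ha : 0 ≤ a) (hb : 0 ≤ b) (hd : 0 ≤ d)
    (h : b ^ 3 ≤ 16000 * (a ^ 3 + a ^ 2 * d)) :
    (a ^ 2 + 2 * a * b) ^ 3 * a ^ 2 ≤ 6 ^ 8 * (a ^ 8 + a ^ 7 * d) := by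
  have hconv : (a + 2 * b) ^ 3 ≤ 4 * (a ^ 3 + 8 * b ^ 3) := by
    nlinarith [mul_nonneg (add_nonneg ha hb) (sq_nonneg (a - 2 * b))]
  have : (a ^ 2 + 2 * a * b) ^ 3 * a ^ 2 = a ^ 5 * (a + 2 * b) ^ 3 := by ring
  rw [this]
  calc a ^ 5 * (a + 2 * b) ^ 3
      ≤ a ^ 5 * (4 * (a ^ 3 + 8 * 16000 * (a ^ 3 + a ^ 2 * d))) := by gcongr; linarith
    _ ≤ 6 ^ 8 * (a ^ 8 + a ^ 7 * d) := by
        nlinarith [pow_nonneg ha 8, mul_nonneg (pow_nonneg ha 7) hd]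

lemma rpow_one_div_eight_le {A D V C : ℝ} (hA : 0 ≤ A) (hD : 0 ≤ D) (hV : 0 ≤ V) (hC : 0 ≤ C)
    (h : V ≤ C ^ 8 * (√A ^ 8 + √A ^ 7 * √D)) :
    V ^ ((1:ℝ)/8) ≤ C * (D ^ ((1:ℝ)/16) * A ^ ((7:ℝ)/16) + A ^ ((1:ℝ)/2)) := by
  have hrt : ∀ x : ℝ, 0 ≤ x → (x ^ 8) ^ ((1:ℝ)/8) = x := fun x hx ↦ by
    rw [one_div]; exact_mod_cast Real.pow_rpow_inv_natCast hx (by norm_num : (8:ℕ) ≠ 0)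
  calc V ^ ((1:ℝ)/8) ≤ (C ^ 8 * (√A ^ 8 + √A ^ 7 * √D)) ^ ((1:ℝ)/8) := by gcongr
    _ = C * (√A ^ 8 + √A ^ 7 * √D) ^ ((1:ℝ)/8) := by
        rw [Real.mul_rpow (by positivity) (by positivity), hrt C hC]
    _ ≤ C * ((√A ^ 8) ^ ((1:ℝ)/8) + (√A ^ 7 * √D) ^ ((1:ℝ)/8)) := by
        gcongr
        exact Real.rpow_add_le_add_rpow (by positivity) (by positivity) (by norm_num) (by norm_num)
    _ = C * (D ^ ((1:ℝ)/16) * A ^ ((7:ℝ)/16) + A ^ ((1:ℝ)/2)) := by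
        rw [hrt _ (Real.sqrt_nonneg A), Real.mul_rpow (by positivity) (by positivity)]
        simp only [Real.sqrt_eq_rpow, ← Real.rpow_natCast, ← Real.rpow_mul hA, ← Real.rpow_mul hD]
        norm_num [add_comm, mul_comm]

lemma integral_pow_eight_le {v : ℝ → ℝ} (hv : ContDiff ℝ 3 v) (h0 : v 0 = 0) (h1 : v 1 = 0) :
    ∫ x in (0:ℝ)..1, v x ^ 8 ≤ 6 ^ 8 * (unitL2Norm v ^ 8
      + unitL2Norm v ^ 7 * unitL2Norm (deriv (deriv (deriv v)))) := by
  set a := unitL2Norm v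
  set b := unitL2Norm (deriv v)
  set c := unitL2Norm (deriv (deriv v))
  set d := unitL2Norm (deriv (deriv (deriv v)))
  have ha : 0 ≤ a := unitL2Norm_nonneg _
  have hb : 0 ≤ b := unitL2Norm_nonneg _
  have hb2 : b ^ 2 ≤ a * c := unitL2Norm_deriv_sq_le_of_eq_zero (hv.of_le (by norm_num)) h0 h1
  have hc2 : c ^ 2 ≤ 400 * (b ^ 2 + b * d) := unitL2Norm_deriv_sq_le hv.deriv'
  have hb3 : b ^ 3 ≤ 16000 * (a ^ 3 + a ^ 2 * d) := by
    refine cube_le_of_pow_four_le ha hb (unitL2Norm_nonneg _) ?_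
    calc b ^ 4 = (b ^ 2) ^ 2 := by ring
      _ ≤ (a * c) ^ 2 := by gcongr
      _ = a ^ 2 * c ^ 2 := by ring
      _ ≤ 400 * a ^ 2 * (b ^ 2 + b * d) := by nlinarith [sq_nonneg a]
  have hsup : ∀ x ∈ Icc (0:ℝ) 1, v x ^ 8 ≤ (a ^ 2 + 2 * a * b) ^ 3 * v x ^ 2 := by
    intro x hx
    have := sq_le_unitL2Norm_sq_add_two_mul (hv.of_le (by norm_num)) hx
    rw [show v x ^ 8 = (v x ^ 2) ^ 3 * v x ^ 2 by ring]
    gcongr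
    linarith
  calc ∫ x in (0:ℝ)..1, v x ^ 8 ≤ ∫ x in (0:ℝ)..1, (a ^ 2 + 2 * a * b) ^ 3 * v x ^ 2 :=
        integral_mono_on zero_le_one (Continuous.intervalIntegrable (by fun_prop) _ _)
          (Continuous.intervalIntegrable (by fun_prop) _ _) hsup
    _ = (a ^ 2 + 2 * a * b) ^ 3 * a ^ 2 := by
        rw [intervalIntegral.integral_const_mul, sq_unitL2Norm]
    _ ≤ 6 ^ 8 * (a ^ 8 + a ^ 7 * d) := cube_mul_sq_le_of_cube_le ha hb (unitL2Norm_nonneg _) hb3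

/-- the Gagliardo–Nirenberg interpolation inequality
`‖v‖_{L⁸(0,1)} ≤ C(‖v'''‖_{L²(0,1)}^{1/8} ‖v‖_{L²(0,1)}^{7/8} + ‖v‖_{L²(0,1)})`,
with a universal constant `C`, for `C³` functions vanishing at the endpoints. -/
theorem gagliardo_nirenberg_L8 :
    ∃ C : ℝ, 0 < C ∧ ∀ v : ℝ → ℝ, ContDiff ℝ 3 v → v 0 = 0 → v 1 = 0 →
      (∫ x in (0:ℝ)..1, |v x| ^ 8) ^ ((1:ℝ)/8)
        ≤ C * ((∫ x in (0:ℝ)..1, |iteratedDeriv 3 v x| ^ 2) ^ ((1:ℝ)/16)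
                 * (∫ x in (0:ℝ)..1, |v x| ^ 2) ^ ((7:ℝ)/16)
               + (∫ x in (0:ℝ)..1, |v x| ^ 2) ^ ((1:ℝ)/2)) := by
  refine ⟨6, by norm_num, fun v hv h0 h1 ↦ ?_⟩
  have hiter : iteratedDeriv 3 v = deriv (deriv (deriv v)) := by
    simp only [iteratedDeriv_succ, iteratedDeriv_zero]
  simp only [sq_abs, hiter, (by norm_num : Even 8).pow_abs]
  exact rpow_one_div_eight_le (integral_nonneg zero_le_one fun _ _ ↦ sq_nonneg _)
    (integral_nonneg zero_le_one fun _ _ ↦ sq_nonneg _)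
    (integral_nonneg zero_le_one fun _ _ ↦ by positivity) (by norm_num)
    (integral_pow_eight_le hv h0 h1)
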